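/- In the airport game with cost vector c ∈ ℝ^n, c₁ ≤ c₂ ≤ ... ≤ c_n, defined by v(S) = max{c_i : i ∈ S} (and v(∅)=0), the Shapley values are given by Sh(i) = Σ_{j=1}^{i} (c_j − c_{j−1})/(n − j + 1), where c₀ = 0. -/

import Mathlib

/-!
With `T j = {j, …, n - 1}` and `u_T S = 1` if `S` meets `T` (else `0`), the airport game is
`∑ j, (c_j - c_{j-1}) • u_{T j}` (with `c_{-1} = 0`), by telescoping. The Shapley value is
linear, and in `u_T` a player `i ∈ T` contributes exactly in the orders where it comes first
among `T`; by the symmetry `swap i t` these are a `1 / #T` fraction of all orders.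
-/

open Finset

/-- The set of players preceding `i` in the order `o`. -/
def Pre {N : Type*} [Fintype N] [DecidableEq N]
    (o : N ≃ Fin (Fintype.card N)) (i : N) : Finset N :=
  univ.filter fun j => o j < o i

/-- The marginal contribution of player `i` in the order `o`. -/
def mc {N : Type*} [Fintype N] [DecidableEq N] (v : Finset N → ℝ)
    (o : N ≃ Fin (Fintype.card N)) (i : N) : ℝ :=
  v (insert i (Pre o i)) - v (Pre o i)

/-- The Shapley value: average marginal contribution over all orders. -/
noncomputable def Sh {N : Type*} [Fintype N] [DecidableEq N]
    (v : Finset N → ℝ) (i : N) : ℝ :=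
  (∑ o : N ≃ Fin (Fintype.card N), mc v o i) / (Nat.factorial (Fintype.card N))

section Counting

variable {N α : Type*} [Fintype N] [DecidableEq N] [Fintype α] [DecidableEq α] [LinearOrder α]

lemma card_filter_forall_le_eq_of_mem {T : Finset N} {i t : N} (hi : i ∈ T) (ht : t ∈ T) :
    #{o : N ≃ α | ∀ k ∈ T, o t ≤ o k} = #{o : N ≃ α | ∀ k ∈ T, o i ≤ o k} := by
  have swap_mem : ∀ k ∈ T, Equiv.swap i t k ∈ T := fun k hk => by
    rcases eq_or_ne k i with rfl | hki
    · simpa using ht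
    rcases eq_or_ne k t with rfl | hkt
    · simpa using hi
    · rwa [Equiv.swap_apply_of_ne_of_ne hki hkt]
  refine card_nbij' (fun o => (Equiv.swap i t).trans o) (fun o => (Equiv.swap i t).trans o)
    ?_ ?_ ?_ ?_
  · intro o ho
    simp only [coe_filter, mem_univ, true_and, Set.mem_ofPred_eq, Equiv.trans_apply] at ho ⊢
    exact fun k hk => by simpa using ho _ (swap_mem k hk)
  · intro o ho
    simp only [coe_filter, mem_univ, true_and, Set.mem_ofPred_eq, Equiv.trans_apply] at ho ⊢
    exact fun k hk => by simpa using ho _ (swap_mem k hk)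
  all_goals intro o _; ext k; simp

/-- Every order has exactly one earliest member of `T`, and by symmetry each member of `T` is
earliest in the same number of orders. -/
lemma card_filter_forall_le_mul_card {T : Finset N} {i : N} (hi : i ∈ T) :
    #{o : N ≃ α | ∀ k ∈ T, o i ≤ o k} * #T = Fintype.card (N ≃ α) := by
  have hunion : T.biUnion (fun t => {o : N ≃ α | ∀ k ∈ T, o t ≤ o k}) = univ := by
    refine eq_univ_of_forall fun o => ?_
    obtain ⟨t, ht, hmin⟩ := T.exists_min_image o ⟨i, hi⟩
    exact mem_biUnion.mpr ⟨t, ht, by simpa using hmin⟩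
  have hdisj : (T : Set N).PairwiseDisjoint
      (fun t => ({o : N ≃ α | ∀ k ∈ T, o t ≤ o k} : Finset _)) := by
    intro t ht t' ht' hne
    refine disjoint_filter.mpr fun o _ h h' => hne (o.injective ?_)
    exact le_antisymm (h t' ht') (h' t ht)
  have hcard := card_biUnion hdisj
  rw [hunion, card_univ] at hcard
  rw [hcard, sum_congr rfl fun t ht => card_filter_forall_le_eq_of_mem hi ht, sum_const,
    smul_eq_mul, mul_comm]

end Counting

section ShapleyValue

variable {N : Type*} [Fintype N] [DecidableEq N]

lemma Sh_sum_mul {ι : Type*} (s : Finset ι) (a : ι → ℝ) (w : ι → Finset N → ℝ) (i : N) :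
    Sh (fun S => ∑ j ∈ s, a j * w j S) i = ∑ j ∈ s, a j * Sh (w j) i := by
  have hmc : ∀ o, mc (fun S => ∑ j ∈ s, a j * w j S) o i = ∑ j ∈ s, a j * mc (w j) o i := by
    intro o
    simp only [mc, mul_sub, sum_sub_distrib]
  simp only [Sh, hmc]
  rw [sum_comm, sum_div]
  simp only [← mul_sum, mul_div_assoc]

def hittingGame (T : Finset N) (S : Finset N) : ℝ :=
  if Disjoint S T then 0 else 1

lemma mc_hittingGame (T : Finset N) (o : N ≃ Fin (Fintype.card N)) (i : N) :
    mc (hittingGame T) o i = if i ∈ T ∧ ∀ k ∈ T, o i ≤ o k then 1 else 0 := by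
  have hdisj : Disjoint (Pre o i) T ↔ ∀ k ∈ T, o i ≤ o k := by
    simp only [Pre, disjoint_left, mem_filter, mem_univ, true_and]
    exact ⟨fun h k hk => not_lt.mp fun hlt => h hlt hk, fun h k hlt hk => (h k hk).not_gt hlt⟩
  by_cases hiT : i ∈ T
  · simp only [mc, hittingGame, disjoint_insert_left, hiT, not_true_eq_false, false_and,
      if_false, true_and, hdisj]
    split_ifs <;> norm_num
  · simp [mc, hittingGame, hiT, disjoint_insert_left]

lemma Sh_hittingGame (T : Finset N) (i : N) :
    Sh (hittingGame T) i = if i ∈ T then 1 / (#T : ℝ) else 0 := by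
  by_cases hiT : i ∈ T
  · have hcount := card_filter_forall_le_mul_card (α := Fin (Fintype.card N)) hiT
    rw [Fintype.card_equiv (Fintype.equivFin N)] at hcount
    have hT : (#T : ℝ) ≠ 0 := by exact_mod_cast (card_pos.mpr ⟨i, hiT⟩).ne'
    have hfac : ((Fintype.card N).factorial : ℝ) ≠ 0 := by positivity
    simp only [Sh, mc_hittingGame, hiT, true_and, if_true, sum_boole]
    rw [div_eq_div_iff hfac hT, one_mul, ← hcount]
    push_cast
    ring
  · simp [Sh, mc_hittingGame, hiT]

end ShapleyValue

def costIncrement (c : ℕ → ℝ) (j : ℕ) : ℝ :=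
  c j - if j = 0 then 0 else c (j - 1)

lemma sum_range_costIncrement (c : ℕ → ℝ) (m : ℕ) :
    ∑ j ∈ range (m + 1), costIncrement c j = c m := by
  induction m with
  | zero => simp [costIncrement]
  | succ m ih => rw [sum_range_succ, ih]; simp [costIncrement]

def upperPlayers (n j : ℕ) : Finset (Fin n) :=
  {k | j ≤ k.val}

@[simp]
lemma mem_upperPlayers {n j : ℕ} {k : Fin n} : k ∈ upperPlayers n j ↔ j ≤ k.val := by
  simp [upperPlayers]

lemma card_upperPlayers (n j : ℕ) : #(upperPlayers n j) = n - j := by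
  have h := card_filter_add_card_filter_not (s := (univ : Finset (Fin n)))
    (fun k => k.val < j)
  rw [Fin.card_filter_val_lt, card_univ, Fintype.card_fin] at h
  simp only [not_lt] at h
  rw [upperPlayers]
  omega

lemma airport_eq_sum_hittingGame {n : ℕ} {c : ℕ → ℝ} (hmono : Monotone fun k : Fin n => c k)
    (S : Finset (Fin n)) :
    (if h : S.Nonempty then S.sup' h (fun k => c k.val) else 0) =
      ∑ j ∈ range n, costIncrement c j * hittingGame (upperPlayers n j) S := by
  rcases S.eq_empty_or_nonempty with rfl | hS
  · simp [hittingGame]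
  obtain ⟨m, hm, hmax⟩ := S.exists_max_image Fin.val hS
  have hsup : S.sup' hS (fun k => c k.val) = c m :=
    le_antisymm (sup'_le _ _ fun k hk => hmono (hmax k hk)) (le_sup' (fun k => c k.val) hm)
  have hhit : ∀ j, hittingGame (upperPlayers n j) S = if j ≤ m then 1 else 0 := by
    intro j
    have : Disjoint S (upperPlayers n j) ↔ ¬ j ≤ m := by
      simp only [upperPlayers, disjoint_left, mem_filter, mem_univ, true_and, not_le]
      exact ⟨fun h => h hm, fun h k hk => by have := hmax k hk; omega⟩
    by_cases hj : j ≤ m <;> simp [hittingGame, this, hj]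
  have hrange : {j ∈ range n | j ≤ m.val} = range (m.val + 1) := by
    ext j; simp only [mem_filter, mem_range]; omega
  simp only [dif_pos hS, hsup, hhit, mul_ite, mul_one, mul_zero]
  rw [← sum_filter, hrange, sum_range_costIncrement]

/-- Players are indexed from `0`, so the paper's `c₀ = 0` becomes the `j = 0` case here. -/
theorem shapley_airport_game_general (n : ℕ) (c : ℕ → ℝ)
    (hmono : ∀ j k, j ≤ k → k < n → c j ≤ c k)
    (v : Finset (Fin n) → ℝ)
    (hv : ∀ S : Finset (Fin n), v S = if h : S.Nonempty
      then S.sup' h (fun j => c j.val) else 0)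
    (i : Fin n) :
    Sh v i = ∑ j ∈ Finset.range (i.val + 1),
      (c j - if j = 0 then 0 else c (j - 1)) / (n - j) := by
  have hmono_fin : Monotone fun k : Fin n => c k := fun j k hjk => hmono j k hjk k.isLt
  have hv' : v = fun S => ∑ j ∈ range n, costIncrement c j * hittingGame (upperPlayers n j) S :=
    funext fun S => (hv S).trans (airport_eq_sum_hittingGame hmono_fin S)
  have hrange : {j ∈ range n | j ≤ i.val} = range (i.val + 1) := by
    ext j; simp only [mem_filter, mem_range]; omega
  rw [hv', Sh_sum_mul]
  simp only [Sh_hittingGame, card_upperPlayers, mem_upperPlayers, mul_ite, mul_zero]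
  rw [← sum_filter, hrange]
  refine sum_congr rfl fun j hj => ?_
  rw [Nat.cast_sub (by have := mem_range.mp hj; omega), mul_one_div, costIncrement]

/-- In the airport game with nondecreasing nonnegative costs `c₀ ≤ c₁ ≤ … ≤ c_{n-1}`
(players indexed from `0`), where `v(S) = max{c_j : j ∈ S}` and `v(∅) = 0`, the
Shapley value of player `i` is `Σ_{j=0}^{i} (c_j − c_{j-1})/(n − j)` (with
`c_{-1} = 0`; in 1-indexed notation this is `Σ_{j=1}^{i} (c_j − c_{j−1})/(n − j + 1)`
with `c₀ = 0`). -/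
theorem shapley_airport_game (n : ℕ) (c : ℕ → ℝ)
    (hnonneg : ∀ j, j < n → 0 ≤ c j)
    (hmono : ∀ j k, j ≤ k → k < n → c j ≤ c k)
    (v : Finset (Fin n) → ℝ)
    (hv : ∀ S : Finset (Fin n), v S = if h : S.Nonempty
      then S.sup' h (fun j => c j.val) else 0)
    (i : Fin n) :
    Sh v i = ∑ j ∈ Finset.range (i.val + 1),
      (c j - if j = 0 then 0 else c (j - 1)) / (n - j) :=
  shapley_airport_game_general n c hmono v hv i
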